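/- arXiv:1309.1991 — 3 statements merged into one kernel-verified Lean document; each statement's English description precedes it below -/
import Mathlib

section
/- Let H be a complex Hilbert space and let A be a densely defined, closed, symmetric operator in H. Assume that for every z ∈ ℂ with Im z ≠ 0 the orthogonal complement of ran(A − zI) has complex dimension 1 (deficiency indices (1,1)), and that A is completely nonselfadjoint, i.e., ⋂_{z ∈ ℂ \ ℝ} ran(A − zI) = {0}. Then H is a separable Hilbert space. -/
/-!
For nonreal `z`, the estimate `|Im z| ‖φ‖ ≤ ‖(A - z) φ‖` together with closedness of `A` makes
`ran (A - z)` closed, and shows that a vector lying in `ran (A - zₙ)` for `zₙ → w`, `w` nonreal,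
also lies in `ran (A - w)`. So a vector orthogonal to the deficiency spaces `ran (A - z)ᗮ` for all
`z` in a countable dense set of nonreal numbers lies in every `ran (A - z)`, hence vanishes by
complete nonselfadjointness: countably many finite-dimensional subspaces span a dense subspace.
-/

open Filter Topology

section

variable {H : Type*} [NormedAddCommGroup H] [InnerProductSpace ℂ H]
  {D : Submodule ℂ H} {A : D →ₗ[ℂ] H}

theorem abs_im_mul_norm_le_norm_sub_smul
    (hA : ∀ φ ψ : D, (inner ℂ (A φ) (ψ : H) : ℂ) = inner ℂ (φ : H) (A ψ)) (z : ℂ) (φ : D) :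
    |z.im| * ‖(φ : H)‖ ≤ ‖A φ - z • (φ : H)‖ := by
  have h_real : (inner ℂ (A φ) (φ : H) : ℂ).im = 0 := by
    have := congrArg Complex.im (inner_conj_symm (A φ) (φ : H))
    rw [Complex.conj_im, ← hA φ φ] at this
    linarith
  have h_im : (inner ℂ (A φ - z • (φ : H)) (φ : H) : ℂ).im = z.im * ‖(φ : H)‖ ^ 2 := by
    rw [inner_sub_left, inner_smul_left, inner_self_eq_norm_sq_to_K]
    simp [h_real, ← Complex.ofReal_pow]
  have h_sq : |z.im| * ‖(φ : H)‖ ^ 2 ≤ ‖A φ - z • (φ : H)‖ * ‖(φ : H)‖ :=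
    calc |z.im| * ‖(φ : H)‖ ^ 2 = |(inner ℂ (A φ - z • (φ : H)) (φ : H) : ℂ).im| := by
          rw [h_im, abs_mul, abs_of_nonneg (sq_nonneg ‖(φ : H)‖)]
      _ ≤ ‖(inner ℂ (A φ - z • (φ : H)) (φ : H) : ℂ)‖ := Complex.abs_im_le_norm _
      _ ≤ ‖A φ - z • (φ : H)‖ * ‖(φ : H)‖ := norm_inner_le_norm _ _
  rcases (norm_nonneg (φ : H)).eq_or_lt with h | h
  · rw [← h]; simp
  · nlinarith

theorem isClosed_range_sub_smul [CompleteSpace H]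
    (hclosed : IsClosed {p : H × H | ∃ φ : D, p = ((φ : H), A φ)})
    (hA : ∀ φ ψ : D, (inner ℂ (A φ) (ψ : H) : ℂ) = inner ℂ (φ : H) (A ψ))
    {z : ℂ} (hz : z.im ≠ 0) :
    IsClosed (LinearMap.range (A - z • D.subtype) : Set H) := by
  refine IsSeqClosed.isClosed fun x y hx hxy => ?_
  choose φ hφ using hx
  simp only [LinearMap.sub_apply, LinearMap.smul_apply, Submodule.subtype_apply] at hφ
  have hc : 0 < |z.im| := abs_pos.mpr hz
  have hφ_cauchy : CauchySeq fun n => (φ n : H) := by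
    refine Metric.cauchySeq_iff.mpr fun ε hε => ?_
    obtain ⟨N, hN⟩ := Metric.cauchySeq_iff.mp hxy.cauchySeq (|z.im| * ε) (by positivity)
    refine ⟨N, fun m hm n hn => ?_⟩
    have h_diff : A (φ m - φ n) - z • ((φ m - φ n : D) : H) = x m - x n := by
      rw [← hφ, ← hφ, map_sub, Submodule.coe_sub, smul_sub]; abel
    have h := abs_im_mul_norm_le_norm_sub_smul hA z (φ m - φ n)
    rw [h_diff, Submodule.coe_sub, ← dist_eq_norm, ← dist_eq_norm] at h
    have h_close := hN m hm n hn
    rw [← mul_lt_mul_iff_of_pos_left hc]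
    linarith
  obtain ⟨l, hl⟩ := cauchySeq_tendsto_of_complete hφ_cauchy
  have hAφ : Tendsto (fun n => A (φ n)) atTop (𝓝 (y + z • l)) := by
    have : (fun n => A (φ n)) = fun n => x n + z • (φ n : H) :=
      funext fun n => by rw [← hφ, sub_add_cancel]
    exact this ▸ hxy.add (hl.const_smul z)
  obtain ⟨ψ, hψ⟩ : (l, y + z • l) ∈ {p : H × H | ∃ φ : D, p = ((φ : H), A φ)} :=
    hclosed.mem_of_tendsto (hl.prodMk_nhds hAφ) (Eventually.of_forall fun n => ⟨φ n, rfl⟩)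
  obtain ⟨rfl, hAψ⟩ := Prod.mk.inj hψ
  exact ⟨ψ, by simp [← hAψ]⟩

theorem mem_range_sub_smul_of_mem_closure [CompleteSpace H]
    (hclosed : IsClosed {p : H × H | ∃ φ : D, p = ((φ : H), A φ)})
    (hA : ∀ φ ψ : D, (inner ℂ (A φ) (ψ : H) : ℂ) = inner ℂ (φ : H) (A ψ))
    {S : Set ℂ} {x : H} (hS : ∀ z ∈ S, x ∈ LinearMap.range (A - z • D.subtype))
    {w : ℂ} (hw : w ∈ closure S) (hw_im : w.im ≠ 0) :
    x ∈ LinearMap.range (A - w • D.subtype) := by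
  obtain ⟨z, hzS, hz⟩ := mem_closure_iff_seq_limit.mp hw
  choose φ hφ using fun n => hS (z n) (hzS n)
  simp only [LinearMap.sub_apply, LinearMap.smul_apply, Submodule.subtype_apply] at hφ
  have h_im : Tendsto (fun n => |(z n).im|) atTop (𝓝 |w.im|) :=
    (Complex.continuous_im.abs.tendsto w).comp hz
  have hφ_bdd : IsBoundedUnder (· ≤ ·) atTop fun n => ‖(φ n : H)‖ := by
    have h_bound := (tendsto_const_nhds (x := ‖x‖)).div h_im (abs_pos.mpr hw_im).ne'
    refine h_bound.isBoundedUnder_le.mono_le ?_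
    filter_upwards [h_im.eventually (lt_mem_nhds (abs_pos.mpr hw_im))] with n hn
    rw [Pi.div_apply, le_div_iff₀ hn, mul_comm, ← hφ n]
    exact abs_im_mul_norm_le_norm_sub_smul hA (z n) (φ n)
  have h_shift : (fun n => A (φ n) - w • (φ n : H)) = fun n => x + (z n - w) • (φ n : H) :=
    funext fun n => by rw [← hφ n]; module
  have h_lim : Tendsto (fun n => A (φ n) - w • (φ n : H)) atTop (𝓝 x) := by
    simpa [h_shift] using
      tendsto_const_nhds.add ((tendsto_sub_nhds_zero_iff.mpr hz).zero_smul_isBoundedUnder_le hφ_bdd)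
  exact (isClosed_range_sub_smul hclosed hA hw_im).mem_of_tendsto h_lim
    (Eventually.of_forall fun n => ⟨φ n, by simp⟩)

end

theorem separableSpace_of_topologicalClosure_iSup_eq_top {𝕜 E ι : Type*} [RCLike 𝕜]
    [NormedAddCommGroup E] [NormedSpace 𝕜 E] [Countable ι] (N : ι → Submodule 𝕜 E)
    [∀ i, FiniteDimensional 𝕜 (N i)] (h : (⨆ i, N i).topologicalClosure = ⊤) :
    TopologicalSpace.SeparableSpace E := by
  have hN : TopologicalSpace.IsSeparable (⋃ i, (N i : Set E)) := .iUnion fun i => by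
    have := FiniteDimensional.proper 𝕜 (N i)
    exact .of_subtype _
  rw [← TopologicalSpace.isSeparable_univ_iff, ← Submodule.top_coe (R := 𝕜), ← h,
    Submodule.topologicalClosure_coe, Submodule.iSup_eq_span]
  exact hN.span.closure

theorem statement1_general
    {H : Type*} [NormedAddCommGroup H] [InnerProductSpace ℂ H] [CompleteSpace H]
    (D : Submodule ℂ H) (A : D →ₗ[ℂ] H)
    (hclosed : IsClosed {p : H × H | ∃ φ : D, p = ((φ : H), A φ)})
    (hsymm : ∀ φ ψ : D, (inner ℂ (A φ) (ψ : H) : ℂ) = inner ℂ (φ : H) (A ψ))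
    (hdef : ∀ z : ℂ, z.im ≠ 0 →
      Module.finrank ℂ ((LinearMap.range (A - z • D.subtype))ᗮ : Submodule ℂ H) = 1)
    (hcns : (⋂ z ∈ {z : ℂ | z.im ≠ 0},
      ((LinearMap.range (A - z • D.subtype) : Submodule ℂ H) : Set H)) = {0}) :
    TopologicalSpace.SeparableSpace H := by
  obtain ⟨Q, hQ_nonreal, hQ_countable, hQ_dense⟩ :=
    (TopologicalSpace.IsSeparable.of_separableSpace
      {z : ℂ | z.im ≠ 0}).exists_countable_dense_subset
  have := hQ_countable.to_subtype
  have (z : Q) : FiniteDimensional ℂ (LinearMap.range (A - (z : ℂ) • D.subtype))ᗮ :=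
    Module.finite_of_finrank_eq_succ (hdef z (hQ_nonreal z.2))
  refine separableSpace_of_topologicalClosure_iSup_eq_top
    (fun z : Q => (LinearMap.range (A - (z : ℂ) • D.subtype))ᗮ) ?_
  rw [Submodule.topologicalClosure_eq_top_iff, Submodule.eq_bot_iff]
  intro x hx
  have hx_Q (z : ℂ) (hz : z ∈ Q) : x ∈ LinearMap.range (A - z • D.subtype) := by
    have := Submodule.orthogonal_le (le_iSup _ ⟨z, hz⟩) hx
    rwa [Submodule.orthogonal_orthogonal_eq_closure, IsClosed.submodule_topologicalClosure_eq
      (isClosed_range_sub_smul hclosed hsymm (hQ_nonreal hz))] at this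
  have hx_nonreal : x ∈ ⋂ z ∈ {z : ℂ | z.im ≠ 0},
      ((LinearMap.range (A - z • D.subtype) : Submodule ℂ H) : Set H) :=
    Set.mem_iInter₂.mpr fun w hw =>
      mem_range_sub_smul_of_mem_closure hclosed hsymm hx_Q (hQ_dense hw) hw
  rwa [hcns] at hx_nonreal

/-- A densely defined, closed, symmetric operator with deficiency indices
(1,1) that is completely nonselfadjoint can exist only in a separable Hilbert space. -/
theorem statement1
    {H : Type*} [NormedAddCommGroup H] [InnerProductSpace ℂ H] [CompleteSpace H]
    (D : Submodule ℂ H) (A : D →ₗ[ℂ] H)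
    (hdense : Dense (D : Set H))
    (hclosed : IsClosed {p : H × H | ∃ φ : D, p = ((φ : H), A φ)})
    (hsymm : ∀ φ ψ : D, (inner ℂ (A φ) (ψ : H) : ℂ) = inner ℂ (φ : H) (A ψ))
    (hdef : ∀ z : ℂ, z.im ≠ 0 →
      Module.finrank ℂ ((LinearMap.range (A - z • D.subtype))ᗮ : Submodule ℂ H) = 1)
    (hcns : (⋂ z ∈ {z : ℂ | z.im ≠ 0},
      ((LinearMap.range (A - z • D.subtype) : Submodule ℂ H) : Set H)) = {0}) :
    TopologicalSpace.SeparableSpace H :=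
  statement1_general D A hclosed hsymm hdef hcns
end

section
/- Let H be a complex Hilbert space and let ξ₁, ξ₂ : ℂ → H be entire (everywhere complex-analytic) H-valued functions such that ξ₁(z) ≠ 0 and ξ₂(z) ≠ 0 for every z ∈ ℂ, and such that for every z ∈ ℂ the vectors ξ₁(z) and ξ₂(z) are linearly dependent (i.e., ξ₁(z) lies in the complex span of ξ₂(z)). Then there exists an entire, nowhere-vanishing function g : ℂ → ℂ such that ξ₁(z) = g(z)·ξ₂(z) for all z ∈ ℂ. If moreover J : H → H is a conjugate-linear map satisfying J² = I and ⟨Jψ, Jφ⟩ = ⟨φ, ψ⟩ for all φ, ψ ∈ H, and Jξᵢ(z) = ξᵢ(conj z) for all z ∈ ℂ and i = 1, 2, then g is real entire, i.e., conj(g(conj z)) = g(z) for all z ∈ ℂ. -/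
open ComplexConjugate Filter Topology

/-! Pointwise dependence and nonvanishing make the coefficient `g z` unique. Near any `z₀`
it is the quotient `φ (ξ₁ z) / φ (ξ₂ z)` for a continuous functional `φ` with
`φ (ξ₂ z₀) ≠ 0`, hence holomorphic. Applying `J` to `ξ₁ z = g z • ξ₂ z` gives
`ξ₁ (conj z) = conj (g z) • ξ₂ (conj z)`, so uniqueness yields `g (conj z) = conj (g z)`. -/

section

variable {𝕜 F E : Type*} [NontriviallyNormedField 𝕜] [NormedAddCommGroup F] [NormedSpace 𝕜 F]
  [NormedAddCommGroup E] [NormedSpace 𝕜 E] [SeparatingDual 𝕜 E]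

theorem differentiableAt_of_eventually_eq_smul {ξ₁ ξ₂ : F → E} {g : F → 𝕜} {x : F}
    (h₁ : DifferentiableAt 𝕜 ξ₁ x) (h₂ : DifferentiableAt 𝕜 ξ₂ x) (hx : ξ₂ x ≠ 0)
    (hg : ∀ᶠ y in 𝓝 x, ξ₁ y = g y • ξ₂ y) :
    DifferentiableAt 𝕜 g x := by
  obtain ⟨φ, hφ⟩ := SeparatingDual.exists_ne_zero (R := 𝕜) hx
  have hφ_near : ∀ᶠ y in 𝓝 x, φ (ξ₂ y) ≠ 0 :=
    (φ.continuous.continuousAt.comp h₂.continuousAt).eventually_ne hφ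
  have hquot : (fun y => φ (ξ₁ y) * (φ (ξ₂ y))⁻¹) =ᶠ[𝓝 x] g := by
    filter_upwards [hg, hφ_near] with y hy hy₂
    rw [hy, map_smul, smul_eq_mul, mul_inv_cancel_right₀ hy₂]
  have hφξ₁ : DifferentiableAt 𝕜 (fun y => φ (ξ₁ y)) x := φ.differentiableAt.comp x h₁
  have hφξ₂ : DifferentiableAt 𝕜 (fun y => φ (ξ₂ y)) x := φ.differentiableAt.comp x h₂
  exact (hφξ₁.mul (hφξ₂.inv hφ)).congr_of_eventuallyEq hquot.symm

theorem differentiable_of_eq_smul {ξ₁ ξ₂ : F → E} {g : F → 𝕜}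
    (h₁ : Differentiable 𝕜 ξ₁) (h₂ : Differentiable 𝕜 ξ₂) (hξ₂ : ∀ x, ξ₂ x ≠ 0)
    (hg : ∀ x, ξ₁ x = g x • ξ₂ x) :
    Differentiable 𝕜 g := fun x =>
  differentiableAt_of_eventually_eq_smul (h₁ x) (h₂ x) (hξ₂ x) (Eventually.of_forall hg)

end

theorem conj_apply_conj_of_eq_smul {E : Type*} [AddCommGroup E] [Module ℂ E]
    {J : E → E} {ξ₁ ξ₂ : ℂ → E} {g : ℂ → ℂ}
    (hJ : ∀ (c : ℂ) (x : E), J (c • x) = conj c • J x) (hξ₂ : ∀ z, ξ₂ z ≠ 0)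
    (hg : ∀ z, ξ₁ z = g z • ξ₂ z)
    (hJ₁ : ∀ z, J (ξ₁ z) = ξ₁ (conj z)) (hJ₂ : ∀ z, J (ξ₂ z) = ξ₂ (conj z)) (z : ℂ) :
    conj (g (conj z)) = g z := by
  have hcoeff : g (conj z) • ξ₂ (conj z) = conj (g z) • ξ₂ (conj z) := by
    rw [← hg, ← hJ₁, hg, hJ, hJ₂]
  rw [smul_left_injective ℂ (hξ₂ _) hcoeff, Complex.conj_conj]

theorem statement2_general
    {H : Type*} [NormedAddCommGroup H] [InnerProductSpace ℂ H]
    (ξ₁ ξ₂ : ℂ → H)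
    (h₁ : Differentiable ℂ ξ₁) (h₂ : Differentiable ℂ ξ₂)
    (hz₁ : ∀ z : ℂ, ξ₁ z ≠ 0) (hz₂ : ∀ z : ℂ, ξ₂ z ≠ 0)
    (hdep : ∀ z : ℂ, ∃ c : ℂ, ξ₁ z = c • ξ₂ z) :
    ∃ g : ℂ → ℂ, Differentiable ℂ g ∧ (∀ z : ℂ, g z ≠ 0) ∧
      (∀ z : ℂ, ξ₁ z = g z • ξ₂ z) ∧
      (∀ J : H → H,
        (∀ (a b : ℂ) (x y : H),
          J (a • x + b • y) = (starRingEnd ℂ) a • J x + (starRingEnd ℂ) b • J y) →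
        (∀ x : H, J (J x) = x) →
        (∀ φ ψ : H, (inner ℂ (J ψ) (J φ) : ℂ) = inner ℂ φ ψ) →
        (∀ z : ℂ, J (ξ₁ z) = ξ₁ ((starRingEnd ℂ) z)) →
        (∀ z : ℂ, J (ξ₂ z) = ξ₂ ((starRingEnd ℂ) z)) →
        ∀ z : ℂ, (starRingEnd ℂ) (g ((starRingEnd ℂ) z)) = g z) := by
  choose g hg using hdep
  refine ⟨g, differentiable_of_eq_smul h₁ h₂ hz₂ hg,
    fun z hgz => hz₁ z (by rw [hg z, hgz, zero_smul]), hg, ?_⟩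
  intro J hJ _ _ hJ₁ hJ₂
  have hJ_smul (c : ℂ) (x : H) : J (c • x) = conj c • J x := by
    simpa using hJ c 0 x x
  exact conj_apply_conj_of_eq_smul hJ_smul hz₂ hg hJ₁ hJ₂

/-- Two zero-free entire `H`-valued functions that are pointwise linearly
dependent differ by a zero-free entire scalar function `g`; if moreover both commute in
the stated way with an involution `J`, then `g` is real entire. -/
theorem statement2
    {H : Type*} [NormedAddCommGroup H] [InnerProductSpace ℂ H] [CompleteSpace H]
    (ξ₁ ξ₂ : ℂ → H)
    (h₁ : Differentiable ℂ ξ₁) (h₂ : Differentiable ℂ ξ₂)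
    (hz₁ : ∀ z : ℂ, ξ₁ z ≠ 0) (hz₂ : ∀ z : ℂ, ξ₂ z ≠ 0)
    (hdep : ∀ z : ℂ, ∃ c : ℂ, ξ₁ z = c • ξ₂ z) :
    ∃ g : ℂ → ℂ, Differentiable ℂ g ∧ (∀ z : ℂ, g z ≠ 0) ∧
      (∀ z : ℂ, ξ₁ z = g z • ξ₂ z) ∧
      (∀ J : H → H,
        (∀ (a b : ℂ) (x y : H),
          J (a • x + b • y) = (starRingEnd ℂ) a • J x + (starRingEnd ℂ) b • J y) →
        (∀ x : H, J (J x) = x) →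
        (∀ φ ψ : H, (inner ℂ (J ψ) (J φ) : ℂ) = inner ℂ φ ψ) →
        (∀ z : ℂ, J (ξ₁ z) = ξ₁ ((starRingEnd ℂ) z)) →
        (∀ z : ℂ, J (ξ₂ z) = ξ₂ ((starRingEnd ℂ) z)) →
        ∀ z : ℂ, (starRingEnd ℂ) (g ((starRingEnd ℂ) z)) = g z) :=
  statement2_general ξ₁ ξ₂ h₁ h₂ hz₁ hz₂ hdep
end

section
/- Let e be a Hermite–Biehler function, let f belong to the de Branges space B(e), and let w ∈ ℂ with Im w ≠ 0 be such that f(w) = 0. Then the entire function g(z) := f(z)·(z − conj w)/(z − w) also belongs to B(e) and has the same norm as f, i.e., ∫_ℝ |g(x)|² |e(x)|⁻² dx = ∫_ℝ |f(x)|² |e(x)|⁻² dx. -/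
/-!
On the real line `|x - conj w| = |x - w|`, so `g = f · (z - conj w)/(z - w)` has the same modulus
as `f` there, which gives square integrability and the equality of norms. In the upper half-plane
the factor `(z - conj w)/(z - w)` has modulus at most `1` when `Im w < 0`; when `Im w > 0` it is
bounded by `5` outside a small disc around `w`, and on that compact disc `g / e` is continuous.
Since `g#` is the same construction applied to `f#` at `conj w`, the growth bounds for `g` and
`g#` each fall into one of these two cases.
-/

open MeasureTheory Complex

noncomputable section

/-- `f#(z) := conj (f (conj z))`. -/
def fsharp (f : ℂ → ℂ) : ℂ → ℂ := fun z => (starRingEnd ℂ) (f ((starRingEnd ℂ) z))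

/-- Hermite–Biehler function: entire with `|e(conj z)| < |e z|` on the upper half-plane. -/
def IsHB (e : ℂ → ℂ) : Prop :=
  Differentiable ℂ e ∧
  ∀ z : ℂ, 0 < z.im → ‖e ((starRingEnd ℂ) z)‖ < ‖e z‖

/-- Membership in the de Branges space `B(e)`. -/
def MemDB (e f : ℂ → ℂ) : Prop :=
  Differentiable ℂ f ∧
  Integrable (fun x : ℝ => ‖f x / e x‖ ^ 2) ∧
  ∃ c : ℝ, 0 ≤ c ∧ ∀ z : ℂ, 0 < z.im →
    ‖f z / e z‖ ≤ c / Real.sqrt z.im ∧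
    ‖fsharp f z / e z‖ ≤ c / Real.sqrt z.im

/-- Squared norm in `B(e)`: `∫ |f(x)|² |e(x)|⁻² dx`. -/
def dBnormSq (e f : ℂ → ℂ) : ℝ :=
  ∫ x : ℝ, ‖f x‖ ^ 2 / ‖e x‖ ^ 2

/-- Inner product in `B(e)`: `∫ conj (f x) * g x * |e x|⁻² dx`. -/
def dBinner (e f g : ℂ → ℂ) : ℂ :=
  ∫ x : ℝ, (starRingEnd ℂ) (f x) * g x / ((‖e x‖ : ℂ)) ^ 2

/-- The reproducing kernel of `B(e)`. -/
def dBkernel (e : ℂ → ℂ) (z w : ℂ) : ℂ :=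
  if z = (starRingEnd ℂ) w then
    (deriv (fsharp e) z * e z - deriv e z * fsharp e z) / (2 * Real.pi * Complex.I)
  else
    (fsharp e z * e ((starRingEnd ℂ) w) - e z * fsharp e ((starRingEnd ℂ) w)) /
      (2 * Real.pi * Complex.I * (z - (starRingEnd ℂ) w))

/-- `s_β(z) := (i/2) (e^{iβ} e(z) − e^{−iβ} e#(z))`. -/
def sfun (e : ℂ → ℂ) (β : ℝ) (z : ℂ) : ℂ :=
  Complex.I / 2 *
    (Complex.exp (Complex.I * β) * e z - Complex.exp (-(Complex.I * β)) * fsharp e z)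

end

open ComplexConjugate

/-- For `f w = 0`, `dslope f w z = f z / (z - w)` off `w`, so this is the entire function
`f(z) (z - conj w) / (z - w)` with its removable singularity at `w` filled in. -/
noncomputable def reflectZero (f : ℂ → ℂ) (w : ℂ) (z : ℂ) : ℂ :=
  dslope f w z * (z - conj w)

def DBBounded (e φ : ℂ → ℂ) : Prop :=
  ∃ c : ℝ, 0 ≤ c ∧ ∀ z : ℂ, 0 < z.im → ‖φ z / e z‖ ≤ c / √z.im

theorem memDB_iff {e f : ℂ → ℂ} :
    MemDB e f ↔ Differentiable ℂ f ∧ Integrable (fun x : ℝ => ‖f x / e x‖ ^ 2) ∧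
      DBBounded e f ∧ DBBounded e (fsharp f) := by
  refine ⟨fun ⟨hd, hi, c, hc0, hc⟩ => ⟨hd, hi, ⟨c, hc0, fun z hz => (hc z hz).1⟩,
    ⟨c, hc0, fun z hz => (hc z hz).2⟩⟩, ?_⟩
  rintro ⟨hd, hi, ⟨c₁, hc₁0, hc₁⟩, ⟨c₂, hc₂0, hc₂⟩⟩
  refine ⟨hd, hi, max c₁ c₂, le_max_of_le_left hc₁0, fun z hz => ⟨?_, ?_⟩⟩
  · exact (hc₁ z hz).trans (by gcongr; exact le_max_left _ _)
  · exact (hc₂ z hz).trans (by gcongr; exact le_max_right _ _)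

theorem IsHB.ne_zero {e : ℂ → ℂ} (he : IsHB e) {z : ℂ} (hz : 0 < z.im) : e z ≠ 0 := by
  intro h
  simpa [h] using (norm_nonneg _).trans_lt (he.2 z hz)

theorem Differentiable.fsharp {f : ℂ → ℂ} (hf : Differentiable ℂ f) :
    Differentiable ℂ (fsharp f) := fun z => by
  have := (hf (conj z)).conj_conj
  rwa [conj_conj] at this

theorem fsharp_dslope (f : ℂ → ℂ) (w : ℂ) :
    fsharp (dslope f w) = dslope (fsharp f) (conj w) := by
  funext z
  rcases eq_or_ne z (conj w) with rfl | hz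
  · simp [fsharp, dslope_same, show fsharp f = conj ∘ f ∘ conj from rfl]
  · have hz' : conj z ≠ w := fun h => hz (by rw [← h, conj_conj])
    simp [fsharp, dslope_of_ne _ hz, dslope_of_ne _ hz', slope_def_field]

section reflectZero

variable {f : ℂ → ℂ} {w z : ℂ}

theorem Differentiable.reflectZero (hf : Differentiable ℂ f) (w : ℂ) :
    Differentiable ℂ (reflectZero f w) :=
  (differentiableOn_univ.1 ((differentiableOn_dslope Filter.univ_mem).2 hf.differentiableOn)).mul
    (differentiable_id.sub_const _)

theorem fsharp_reflectZero (f : ℂ → ℂ) (w : ℂ) :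
    fsharp (reflectZero f w) = reflectZero (fsharp f) (conj w) := by
  funext z
  simp [reflectZero, ← fsharp_dslope, fsharp]

theorem reflectZero_of_ne (hfw : f w = 0) (hz : z ≠ w) :
    reflectZero f w z = f z * (z - conj w) / (z - w) := by
  rw [reflectZero, dslope_of_ne _ hz, slope_def_field, hfw, sub_zero]
  ring

theorem norm_reflectZero_div (e : ℂ → ℂ) (hfw : f w = 0) (hz : z ≠ w) :
    ‖reflectZero f w z / e z‖ = ‖f z / e z‖ * (‖z - conj w‖ / ‖z - w‖) := by
  rw [reflectZero_of_ne hfw hz, norm_div, norm_div, norm_mul, norm_div]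
  ring

theorem norm_reflectZero_ofReal (hfw : f w = 0) (hw : w.im ≠ 0) (x : ℝ) :
    ‖reflectZero f w x‖ = ‖f x‖ := by
  have hxw : (x : ℂ) - w ≠ 0 := sub_ne_zero.2 fun h => hw (by simp [← h])
  have : (x : ℂ) - conj w = conj ((x : ℂ) - w) := by simp
  rw [reflectZero_of_ne hfw (sub_ne_zero.1 hxw), norm_div, norm_mul, this, norm_conj,
    mul_div_assoc, div_self (norm_ne_zero_iff.2 hxw), mul_one]

end reflectZero

theorem norm_sub_conj_le_norm_sub {v z : ℂ} (hv : v.im < 0) (hz : 0 < z.im) :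
    ‖z - conj v‖ ≤ ‖z - v‖ := by
  rw [← sq_le_sq₀ (norm_nonneg _) (norm_nonneg _), Complex.sq_norm, Complex.sq_norm, normSq_apply,
    normSq_apply]
  simp only [sub_re, sub_im, conj_re, conj_im]
  nlinarith [mul_pos (neg_pos.2 hv) hz]

theorem norm_sub_conj_le_five_mul {v z : ℂ} (hv : 0 < v.im) (hz : v.im / 2 < ‖z - v‖) :
    ‖z - conj v‖ ≤ 5 * ‖z - v‖ :=
  calc ‖z - conj v‖ ≤ ‖z - v‖ + ‖v - conj v‖ := norm_sub_le_norm_sub_add_norm_sub _ _ _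
    _ = ‖z - v‖ + 2 * v.im := by
      rw [sub_conj, norm_mul, norm_I, mul_one, norm_real, Real.norm_of_nonneg (by positivity)]
    _ ≤ 5 * ‖z - v‖ := by linarith

namespace DBBounded

variable {e φ : ℂ → ℂ} {v : ℂ}

theorem reflectZero_of_im_neg (h : DBBounded e φ) (hv : v.im < 0) (hφv : φ v = 0) :
    DBBounded e (reflectZero φ v) := by
  obtain ⟨c, hc0, hc⟩ := h
  refine ⟨c, hc0, fun z hz => ?_⟩
  have hzv : z ≠ v := fun h => by linarith [congrArg im h]
  rw [norm_reflectZero_div e hφv hzv]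
  calc ‖φ z / e z‖ * (‖z - conj v‖ / ‖z - v‖) ≤ ‖φ z / e z‖ * 1 := by
        gcongr
        exact div_le_one_of_le₀ (norm_sub_conj_le_norm_sub hv hz) (norm_nonneg _)
    _ ≤ c / √z.im := by simpa using hc z hz

theorem reflectZero_of_im_pos (he : IsHB e) (hφ : Differentiable ℂ φ) (h : DBBounded e φ)
    (hv : 0 < v.im) (hφv : φ v = 0) : DBBounded e (reflectZero φ v) := by
  obtain ⟨c, hc0, hc⟩ := h
  set B := Metric.closedBall v (v.im / 2)
  have him : ∀ z ∈ B, |z.im - v.im| ≤ v.im / 2 := fun z hz =>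
    (by simpa using abs_im_le_norm (z - v) : |z.im - v.im| ≤ ‖z - v‖).trans
      (by simpa [B, dist_eq] using hz)
  have hcont : ContinuousOn (fun z => reflectZero φ v z / e z) B :=
    (hφ.reflectZero v).continuous.continuousOn.div he.1.continuous.continuousOn
      fun z hz => he.ne_zero (by linarith [abs_le.1 (him z hz)])
  obtain ⟨K, hK⟩ := (isCompact_closedBall v _).exists_bound_of_continuousOn hcont
  refine ⟨max (5 * c) (max K 0 * √(3 * v.im / 2)), le_max_of_le_left (by positivity),
    fun z hz => ?_⟩
  by_cases hzB : z ∈ B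
  · rw [le_div_iff₀ (Real.sqrt_pos.2 hz)]
    calc ‖reflectZero φ v z / e z‖ * √z.im ≤ max K 0 * √(3 * v.im / 2) :=
          mul_le_mul ((hK z hzB).trans (le_max_left _ _))
            (Real.sqrt_le_sqrt (by linarith [abs_le.1 (him z hzB)])) (Real.sqrt_nonneg _)
            (le_max_right _ _)
      _ ≤ _ := le_max_right _ _
  · have hzv : v.im / 2 < ‖z - v‖ := by simpa [B, dist_eq] using hzB
    have hzv' : z - v ≠ 0 := norm_pos_iff.1 (by linarith)
    rw [norm_reflectZero_div e hφv (sub_ne_zero.1 hzv')]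
    calc ‖φ z / e z‖ * (‖z - conj v‖ / ‖z - v‖) ≤ c / √z.im * 5 := by
          gcongr
          · exact hc z hz
          · exact div_le_of_le_mul₀ (norm_nonneg _) (by norm_num)
              (norm_sub_conj_le_five_mul hv hzv)
      _ ≤ _ := by
          rw [div_mul_eq_mul_div, mul_comm]
          gcongr
          exact le_max_left _ _

theorem reflectZero (he : IsHB e) (hφ : Differentiable ℂ φ) (h : DBBounded e φ)
    (hv : v.im ≠ 0) (hφv : φ v = 0) : DBBounded e (reflectZero φ v) :=
  hv.lt_or_gt.elim (h.reflectZero_of_im_neg · hφv) (h.reflectZero_of_im_pos he hφ · hφv)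

end DBBounded

/-- If `f ∈ B(e)` vanishes at a nonreal point `w`, then the entire
function `g(z) = f(z)(z − conj w)/(z − w)` belongs to `B(e)` and has the same norm. -/
theorem statement4 (e f : ℂ → ℂ) (he : IsHB e) (hf : MemDB e f)
    (w : ℂ) (hw : w.im ≠ 0) (hfw : f w = 0) :
    ∃ g : ℂ → ℂ, Differentiable ℂ g ∧
      (∀ z : ℂ, z ≠ w → g z = f z * (z - (starRingEnd ℂ) w) / (z - w)) ∧
      MemDB e g ∧ dBnormSq e g = dBnormSq e f := by
  obtain ⟨hfd, hfi, hfb, hfsb⟩ := memDB_iff.1 hf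
  have hnorm := norm_reflectZero_ofReal hfw hw
  refine ⟨reflectZero f w, hfd.reflectZero w, fun z hz => reflectZero_of_ne hfw hz,
    memDB_iff.2 ⟨hfd.reflectZero w, ?_, hfb.reflectZero he hfd hw hfw, ?_⟩, ?_⟩
  · exact hfi.congr (Filter.Eventually.of_forall fun x => by simp only [norm_div, hnorm])
  · rw [fsharp_reflectZero]
    exact hfsb.reflectZero he hfd.fsharp (by simpa using hw) (by simp [fsharp, hfw])
  · simp only [dBnormSq, hnorm]
end
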